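/- Let x : [0,∞) → ℝ^{N+1} be continuously differentiable and satisfy ẋ(t) = A x(t) + B K x(t−τ) for all t ≥ τ. Define V₀(t) = x(t)ᵀP₁x(t), V_S(t) = ∫_{t−τ}^{t} e^{−2δ(t−s)} x(s)ᵀ S x(s) ds, V_R(t) = τ·∫_{−τ}^{0} ∫_{t+θ}^{t} e^{−2δ(t−s)} ẋ(s)ᵀ R ẋ(s) ds dθ, and V₁ = V₀ + V_S + V_R. Then for every t ≥ τ at which V₁ is differentiable, V̇₁(t) + 2δ V₁(t) ≤ ψ(t)ᵀ Φ ψ(t), where ψ(t) = (x(t), ẋ(t), x(t−τ)) ∈ ℝ^{3(N+1)}. -/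

import Mathlib

/-!
For `r ≥ t` both integral terms of `V₁` are `e^{-2δr}` times differences of values of a
primitive of `s ↦ e^{2δs} φ(s)` (for the double integral, also of a primitive of that one), so
the fundamental theorem of calculus gives the right derivative of `V₁` at `t`, which is
`deriv V₁ t` because `V₁` is differentiable there. The factor `e^{-2δr}` cancels against `2δV₁`:
`V̇₁ + 2δV₁ = 2xᵀP₁ẋ + 2δxᵀP₁x + xᵀSx - e^{-2δτ}x_τᵀSx_τ + τ²ẋᵀRẋ - τ∫_{t-τ}^t e^{-2δ(t-s)}ẋᵀRẋ`.
Bounding the weight below by `e^{-2δτ}` and applying Jensen's inequality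
`(∫ẋ)ᵀR(∫ẋ) ≤ τ∫ẋᵀRẋ` to `∫ẋ = x(t) - x(t-τ)` bounds the last term by
`-e^{-2δτ}(x - x_τ)ᵀR(x - x_τ)`. The result is `ψᵀΦψ` minus the descriptor term
`2(P₂x + P₃ẋ)ᵀ(Ax + BKx_τ - ẋ)`, which vanishes along solutions.
-/

open Matrix

open Matrix

/-- The diagonal matrix `A = diag(a - λ₀, …, a - λ_N)` with `λₙ = (nπ)²`. -/
noncomputable def Amat (N : ℕ) (a : ℝ) : Matrix (Fin (N + 1)) (Fin (N + 1)) ℝ :=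
  Matrix.diagonal fun n : Fin (N + 1) => a - ((n : ℕ) * Real.pi) ^ 2

/-- The column vector `B` with `B₀ = 1` and `Bₙ = (-1)ⁿ√2` for `1 ≤ n ≤ N`. -/
noncomputable def Bmat (N : ℕ) : Matrix (Fin (N + 1)) (Fin 1) ℝ :=
  Matrix.of fun i _ => if (i : ℕ) = 0 then (1 : ℝ) else (-1 : ℝ) ^ (i : ℕ) * Real.sqrt 2

/-- The symmetric 3(N+1)×3(N+1) block matrix `Φ` from the LMI of Theorem 2 (le2). -/
noncomputable def Phi (N : ℕ) (a δ τ : ℝ) (K : Matrix (Fin 1) (Fin (N + 1)) ℝ)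
    (P₁ P₂ P₃ S R : Matrix (Fin (N + 1)) (Fin (N + 1)) ℝ) :
    Matrix (Fin (N + 1) ⊕ (Fin (N + 1) ⊕ Fin (N + 1)))
      (Fin (N + 1) ⊕ (Fin (N + 1) ⊕ Fin (N + 1))) ℝ :=
  let A := Amat N a
  let BK := Bmat N * K
  let Φ11 := Aᵀ * P₂ + P₂ᵀ * A + (2 * δ) • P₁ + S - Real.exp (-2 * δ * τ) • R
  let Φ12 := P₁ - P₂ᵀ + Aᵀ * P₃
  let Φ13 := Real.exp (-2 * δ * τ) • R + P₂ᵀ * BK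
  let Φ22 := -P₃ - P₃ᵀ + τ ^ 2 • R
  let Φ23 := P₃ᵀ * BK
  let Φ33 := -(Real.exp (-2 * δ * τ)) • (S + R)
  Matrix.fromBlocks Φ11 (Matrix.fromCols Φ12 Φ13) (Matrix.fromRows Φ12ᵀ Φ13ᵀ)
    (Matrix.fromBlocks Φ22 Φ23 Φ23ᵀ Φ33)

open Set MeasureTheory

section QuadraticForm

variable {n : Type*} [Fintype n]

theorem HasDerivAt.dotProduct_mulVec (M : Matrix n n ℝ) {x : ℝ → n → ℝ} {v : n → ℝ} {t : ℝ}
    (hx : HasDerivAt x v t) :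
    HasDerivAt (fun r => x r ⬝ᵥ M *ᵥ x r) (v ⬝ᵥ M *ᵥ x t + x t ⬝ᵥ M *ᵥ v) t := by
  have hMx : HasDerivAt (fun r => M *ᵥ x r) (M *ᵥ v) t :=
    (Matrix.mulVecLin M).toContinuousLinearMap.hasFDerivAt.comp_hasDerivAt t hx
  simp only [dotProduct, ← Finset.sum_add_distrib]
  exact HasDerivAt.fun_sum fun i _ => (hasDerivAt_pi.1 hx i).mul (hasDerivAt_pi.1 hMx i)

theorem ContinuousOn.dotProduct_mulVec (M : Matrix n n ℝ) {x : ℝ → n → ℝ} {s : Set ℝ}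
    (hx : ContinuousOn x s) : ContinuousOn (fun r => x r ⬝ᵥ M *ᵥ x r) s :=
  (continuous_id.dotProduct (continuous_const.matrix_mulVec continuous_id)).comp_continuousOn hx

theorem intervalIntegral.integral_dotProduct {a b : ℝ} {g : ℝ → n → ℝ}
    (hg : IntervalIntegrable g volume a b) (w : n → ℝ) :
    ∫ s in a..b, g s ⬝ᵥ w = (∫ s in a..b, g s) ⬝ᵥ w := by
  simpa using ((dotProductBilin ℝ ℝ).flip w).toContinuousLinearMap.intervalIntegral_comp_comm hg

theorem Matrix.PosSemidef.dotProduct_mulVec_self_nonneg {R : Matrix n n ℝ} (hR : R.PosSemidef)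
    (v : n → ℝ) : 0 ≤ v ⬝ᵥ R *ᵥ v := by
  simpa using hR.dotProduct_mulVec_nonneg v

theorem Matrix.PosSemidef.integral_dotProduct_mulVec_le {R : Matrix n n ℝ} (hR : R.PosSemidef)
    {a b : ℝ} (hab : a ≤ b) {g : ℝ → n → ℝ} (hg : ContinuousOn g (uIcc a b)) :
    (∫ s in a..b, g s) ⬝ᵥ R *ᵥ (∫ s in a..b, g s) ≤ (b - a) * ∫ s in a..b, g s ⬝ᵥ R *ᵥ g s := by
  rcases hab.eq_or_lt with rfl | hab
  · simp
  set v := ∫ s in a..b, g s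
  set L := b - a
  set J := ∫ s in a..b, g s ⬝ᵥ R *ᵥ g s
  have hgi : IntervalIntegrable g volume a b := hg.intervalIntegrable
  have hexpand : ∀ s, (L • g s - v) ⬝ᵥ R *ᵥ (L • g s - v) = L ^ 2 * (g s ⬝ᵥ R *ᵥ g s)
      - L * (g s ⬝ᵥ R *ᵥ v) - L * (g s ⬝ᵥ v ᵥ* R) + v ⬝ᵥ R *ᵥ v := by
    intro s
    simp only [mulVec_sub, mulVec_smul, sub_dotProduct, dotProduct_sub, smul_dotProduct,
      dotProduct_smul, smul_eq_mul, dotProduct_mulVec v R (g s), dotProduct_comm (v ᵥ* R)]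
    ring
  have hintegral : ∫ s in a..b, (L • g s - v) ⬝ᵥ R *ᵥ (L • g s - v)
      = L ^ 2 * J - L * (v ⬝ᵥ R *ᵥ v) := by
    simp only [hexpand]
    rw [intervalIntegral.integral_add, intervalIntegral.integral_sub, intervalIntegral.integral_sub,
      intervalIntegral.integral_const_mul, intervalIntegral.integral_const_mul,
      intervalIntegral.integral_const_mul, intervalIntegral.integral_dotProduct hgi,
      intervalIntegral.integral_dotProduct hgi, intervalIntegral.integral_const,
      dotProduct_comm _ (v ᵥ* R), ← dotProduct_mulVec, smul_eq_mul]
    · ring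
    all_goals apply ContinuousOn.intervalIntegrable; fun_prop
  have hnonneg : 0 ≤ ∫ s in a..b, (L • g s - v) ⬝ᵥ R *ᵥ (L • g s - v) :=
    intervalIntegral.integral_nonneg hab.le fun s _ => hR.dotProduct_mulVec_self_nonneg _
  have hL : 0 < L := sub_pos.2 hab
  nlinarith

end QuadraticForm

section Primitive

variable {E : Type*} [NormedAddCommGroup E] [NormedSpace ℝ E]
  {f : ℝ → E} {c : ℝ}

theorem ContinuousOn.hasDerivWithinAt_integral_Ici [CompleteSpace E]
    (hf : ContinuousOn f (Ici c)) {b : ℝ} (hb : c ≤ b) :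
    HasDerivWithinAt (fun u => ∫ s in c..u, f s) (f b) (Ici b) b := by
  have hIoi : Ioi b ⊆ Ici c := fun y hy => hb.trans (le_of_lt hy)
  exact intervalIntegral.integral_hasDerivWithinAt_right
    (hf.mono (by rw [uIcc_of_le hb]; exact Icc_subset_Ici_self)).intervalIntegrable
    ⟨Ici c, Filter.mem_of_superset self_mem_nhdsWithin hIoi,
      hf.aestronglyMeasurable measurableSet_Ici⟩
    ((hf b hb).mono hIoi)

theorem ContinuousOn.continuousOn_integral_Ici (hf : ContinuousOn f (Ici c)) :
    ContinuousOn (fun u => ∫ s in c..u, f s) (Ici c) := by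
  intro w (hw : c ≤ w)
  have hIcc : uIcc c (w + 1) = Icc c (w + 1) := uIcc_of_le (by linarith)
  have hcont := intervalIntegral.continuousOn_primitive_interval (μ := volume) (b := w + 1)
    (hIcc ▸ (hf.mono Icc_subset_Ici_self).integrableOn_Icc)
  rw [hIcc] at hcont
  refine (hcont w ⟨hw, by linarith⟩).mono_of_mem_nhdsWithin ?_
  rw [← Ici_inter_Iic]
  exact inter_mem_nhdsWithin _ (Iic_mem_nhds (by linarith))

end Primitive

theorem HasDerivWithinAt.comp_sub_const_Ici {f : ℝ → ℝ} {f' t τ : ℝ}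
    (hf : HasDerivWithinAt f f' (Ici (t - τ)) (t - τ)) :
    HasDerivWithinAt (fun r => f (r - τ)) f' (Ici t) t := by
  simpa only [mul_one, Function.comp_def] using
    hf.comp t ((hasDerivAt_id' t).sub_const τ).hasDerivWithinAt
      fun r hr => sub_le_sub_right (mem_Ici.1 hr) τ

theorem HasDerivWithinAt.exp_neg_two_mul_mul {F : ℝ → ℝ} {F' : ℝ} {s : Set ℝ} {t : ℝ} (δ : ℝ)
    (hF : HasDerivWithinAt F F' s t) :
    HasDerivWithinAt (fun r => Real.exp (-2 * δ * r) * F r)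
      (Real.exp (-2 * δ * t) * F' - 2 * δ * (Real.exp (-2 * δ * t) * F t)) s t := by
  have hexp :
      HasDerivAt (fun r => Real.exp (-2 * δ * r)) (Real.exp (-2 * δ * t) * (-2 * δ)) t := by
    simpa using ((hasDerivAt_id t).const_mul (-2 * δ)).exp
  exact (hexp.hasDerivWithinAt.fun_mul hF).congr_deriv (by ring)

section DelayIntegral

variable {δ τ : ℝ} {φ : ℝ → ℝ}

noncomputable def delayIntegral (δ τ : ℝ) (φ : ℝ → ℝ) (t : ℝ) : ℝ :=
  ∫ s in (t - τ)..t, Real.exp (-2 * δ * (t - s)) * φ s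

noncomputable def doubleDelayIntegral (δ τ : ℝ) (φ : ℝ → ℝ) (t : ℝ) : ℝ :=
  ∫ θ in (-τ)..(0 : ℝ), ∫ s in (t + θ)..t, Real.exp (-2 * δ * (t - s)) * φ s

noncomputable def expPrimitive (δ c : ℝ) (φ : ℝ → ℝ) (u : ℝ) : ℝ :=
  ∫ s in c..u, Real.exp (2 * δ * s) * φ s

theorem continuousOn_exp_mul {c : ℝ} (hφ : ContinuousOn φ (Ici c)) :
    ContinuousOn (fun s => Real.exp (2 * δ * s) * φ s) (Ici c) := by
  fun_prop

theorem integral_exp_mul_eq_expPrimitive_sub {c a r : ℝ} (hφ : ContinuousOn φ (Ici c))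
    (ha : c ≤ a) (hr : c ≤ r) :
    ∫ s in a..r, Real.exp (-2 * δ * (r - s)) * φ s
      = Real.exp (-2 * δ * r) * (expPrimitive δ c φ r - expPrimitive δ c φ a) := by
  have hint : ∀ b, c ≤ b → IntervalIntegrable (fun s => Real.exp (2 * δ * s) * φ s) volume c b :=
    fun b hb => ((continuousOn_exp_mul hφ).mono
      (by rw [uIcc_of_le hb]; exact Icc_subset_Ici_self)).intervalIntegrable
  rw [expPrimitive, expPrimitive,
    intervalIntegral.integral_interval_sub_left (hint r hr) (hint a ha),
    ← intervalIntegral.integral_const_mul]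
  refine intervalIntegral.integral_congr fun s _ => ?_
  rw [← mul_assoc, ← Real.exp_add]
  congr 2
  ring

theorem hasDerivWithinAt_expPrimitive {c b : ℝ} (hφ : ContinuousOn φ (Ici c)) (hb : c ≤ b) :
    HasDerivWithinAt (expPrimitive δ c φ) (Real.exp (2 * δ * b) * φ b) (Ici b) b :=
  (continuousOn_exp_mul hφ).hasDerivWithinAt_integral_Ici hb

theorem exp_mul_exp_mul_sub (δ t τ : ℝ) :
    Real.exp (-2 * δ * t) * Real.exp (2 * δ * (t - τ)) = Real.exp (-2 * δ * τ) := by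
  rw [← Real.exp_add]; ring_nf

variable {t : ℝ}

theorem delayIntegral_eq_expPrimitive_sub (hτ : 0 ≤ τ) (hφ : ContinuousOn φ (Ici (t - τ)))
    {r : ℝ} (hr : t ≤ r) :
    delayIntegral δ τ φ r
      = Real.exp (-2 * δ * r) * (expPrimitive δ (t - τ) φ r - expPrimitive δ (t - τ) φ (r - τ)) :=
  integral_exp_mul_eq_expPrimitive_sub hφ (by linarith) (by linarith)

theorem hasDerivWithinAt_delayIntegral (hτ : 0 ≤ τ) (hφ : ContinuousOn φ (Ici (t - τ))) :
    HasDerivWithinAt (delayIntegral δ τ φ)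
      (φ t - Real.exp (-2 * δ * τ) * φ (t - τ) - 2 * δ * delayIntegral δ τ φ t) (Ici t) t := by
  have hΦ := fun b (hb : t - τ ≤ b) => hasDerivWithinAt_expPrimitive (δ := δ) hφ hb
  have hW := ((hΦ t (by linarith)).fun_sub
    (hΦ (t - τ) le_rfl).comp_sub_const_Ici).exp_neg_two_mul_mul δ
  refine (hW.congr (fun r hr => delayIntegral_eq_expPrimitive_sub hτ hφ hr)
    (delayIntegral_eq_expPrimitive_sub hτ hφ le_rfl)).congr_deriv ?_
  rw [delayIntegral_eq_expPrimitive_sub hτ hφ le_rfl]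
  have h₀ : Real.exp (-2 * δ * t) * Real.exp (2 * δ * t) = 1 := by
    simpa using exp_mul_exp_mul_sub δ t 0
  linear_combination φ t * h₀ - φ (t - τ) * exp_mul_exp_mul_sub δ t τ

theorem doubleDelayIntegral_eq_expPrimitive (hτ : 0 ≤ τ) (hφ : ContinuousOn φ (Ici (t - τ)))
    {r : ℝ} (hr : t ≤ r) :
    doubleDelayIntegral δ τ φ r = Real.exp (-2 * δ * r) * (τ * expPrimitive δ (t - τ) φ r
      - ((∫ u in (t - τ)..r, expPrimitive δ (t - τ) φ u)
        - ∫ u in (t - τ)..(r - τ), expPrimitive δ (t - τ) φ u)) := by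
  set Φ := expPrimitive δ (t - τ) φ
  have hΦ : ContinuousOn Φ (Ici (t - τ)) := (continuousOn_exp_mul hφ).continuousOn_integral_Ici
  have hΦint : ∀ b, t - τ ≤ b → IntervalIntegrable Φ volume (t - τ) b := fun b hb =>
    (hΦ.mono (by rw [uIcc_of_le hb]; exact Icc_subset_Ici_self)).intervalIntegrable
  have hinner : EqOn (fun θ => ∫ s in (r + θ)..r, Real.exp (-2 * δ * (r - s)) * φ s)
      (fun θ => Real.exp (-2 * δ * r) * Φ r - Real.exp (-2 * δ * r) * Φ (r + θ))
      (uIcc (-τ) 0) := by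
    intro θ hθ
    rw [uIcc_of_le (by linarith)] at hθ
    simp only
    rw [integral_exp_mul_eq_expPrimitive_sub hφ (by linarith [hθ.1]) (by linarith), mul_sub]
  have hshift :
      IntervalIntegrable (fun θ => Real.exp (-2 * δ * r) * Φ (r + θ)) volume (-τ) 0 := by
    refine (continuousOn_const.mul
      (hΦ.comp (continuous_const_add r).continuousOn ?_)).intervalIntegrable
    intro θ hθ
    rw [uIcc_of_le (by linarith)] at hθ
    simp only [mem_Ici]; linarith [hθ.1]
  rw [doubleDelayIntegral, intervalIntegral.integral_congr hinner,
    intervalIntegral.integral_sub intervalIntegrable_const hshift,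
    intervalIntegral.integral_const, intervalIntegral.integral_const_mul,
    intervalIntegral.integral_comp_add_left Φ r,
    intervalIntegral.integral_interval_sub_left (hΦint r (by linarith))
      (hΦint (r - τ) (by linarith))]
  simp only [smul_eq_mul, add_zero, ← sub_eq_add_neg]
  ring

theorem hasDerivWithinAt_doubleDelayIntegral (hτ : 0 ≤ τ) (hφ : ContinuousOn φ (Ici (t - τ))) :
    HasDerivWithinAt (doubleDelayIntegral δ τ φ)
      (τ * φ t - delayIntegral δ τ φ t - 2 * δ * doubleDelayIntegral δ τ φ t) (Ici t) t := by
  set Φ := expPrimitive δ (t - τ) φ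
  have hΦ : ContinuousOn Φ (Ici (t - τ)) := (continuousOn_exp_mul hφ).continuousOn_integral_Ici
  have hΨ := fun b (hb : t - τ ≤ b) => hΦ.hasDerivWithinAt_integral_Ici hb
  have hU := (((hasDerivWithinAt_expPrimitive (δ := δ) hφ (by linarith : t - τ ≤ t)).const_mul
    τ).fun_sub ((hΨ t (by linarith)).fun_sub
      (hΨ (t - τ) le_rfl).comp_sub_const_Ici)).exp_neg_two_mul_mul δ
  refine (hU.congr (fun r hr => doubleDelayIntegral_eq_expPrimitive hτ hφ hr)
    (doubleDelayIntegral_eq_expPrimitive hτ hφ le_rfl)).congr_deriv ?_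
  rw [doubleDelayIntegral_eq_expPrimitive hτ hφ le_rfl,
    delayIntegral_eq_expPrimitive_sub hτ hφ le_rfl]
  have h₀ : Real.exp (-2 * δ * t) * Real.exp (2 * δ * t) = 1 := by
    simpa using exp_mul_exp_mul_sub δ t 0
  linear_combination τ * φ t * h₀

end DelayIntegral

theorem Matrix.PosSemidef.exp_mul_dotProduct_mulVec_sub_le_delayIntegral {n : Type*} [Fintype n]
    {R : Matrix n n ℝ} (hR : R.PosSemidef) {δ τ t : ℝ} (hδ : 0 ≤ δ) (hτ : 0 ≤ τ)
    {x x' : ℝ → n → ℝ} (hx : ∀ s ∈ Icc (t - τ) t, HasDerivAt x (x' s) s)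
    (hx' : ContinuousOn x' (Icc (t - τ) t)) :
    Real.exp (-2 * δ * τ) * ((x t - x (t - τ)) ⬝ᵥ R *ᵥ (x t - x (t - τ)))
      ≤ τ * delayIntegral δ τ (fun s => x' s ⬝ᵥ R *ᵥ x' s) t := by
  have hIcc : uIcc (t - τ) t = Icc (t - τ) t := uIcc_of_le (by linarith)
  have hFTC : ∫ s in (t - τ)..t, x' s = x t - x (t - τ) :=
    intervalIntegral.integral_eq_sub_of_hasDerivAt (hIcc ▸ hx) (hIcc ▸ hx').intervalIntegrable
  have hJensen := hR.integral_dotProduct_mulVec_le (by linarith : t - τ ≤ t) (hIcc ▸ hx')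
  rw [hFTC, sub_sub_cancel] at hJensen
  have hweight : Real.exp (-2 * δ * τ) * ∫ s in (t - τ)..t, x' s ⬝ᵥ R *ᵥ x' s
      ≤ delayIntegral δ τ (fun s => x' s ⬝ᵥ R *ᵥ x' s) t := by
    rw [delayIntegral, ← intervalIntegral.integral_const_mul]
    refine intervalIntegral.integral_mono_on (by linarith) ?_ ?_ fun s hs => ?_
    · exact ContinuousOn.intervalIntegrable (by rw [hIcc]; fun_prop)
    · exact ContinuousOn.intervalIntegrable (by rw [hIcc]; fun_prop)
    · exact mul_le_mul_of_nonneg_right (Real.exp_le_exp.2 (by nlinarith [hs.1]))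
        (hR.dotProduct_mulVec_self_nonneg _)
  calc Real.exp (-2 * δ * τ) * ((x t - x (t - τ)) ⬝ᵥ R *ᵥ (x t - x (t - τ)))
      ≤ Real.exp (-2 * δ * τ) * (τ * ∫ s in (t - τ)..t, x' s ⬝ᵥ R *ᵥ x' s) :=
        mul_le_mul_of_nonneg_left hJensen (Real.exp_nonneg _)
    _ = τ * (Real.exp (-2 * δ * τ) * ∫ s in (t - τ)..t, x' s ⬝ᵥ R *ᵥ x' s) := by ring
    _ ≤ τ * delayIntegral δ τ (fun s => x' s ⬝ᵥ R *ᵥ x' s) t :=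
        mul_le_mul_of_nonneg_left hweight hτ

theorem dotProduct_Phi_mulVec (N : ℕ) (a δ τ : ℝ) (K : Matrix (Fin 1) (Fin (N + 1)) ℝ)
    (P₁ P₂ P₃ S R : Matrix (Fin (N + 1)) (Fin (N + 1)) ℝ) (hP₁ : P₁ᵀ = P₁) (hR : Rᵀ = R)
    (X Y Z : Fin (N + 1) → ℝ) :
    Sum.elim X (Sum.elim Y Z) ⬝ᵥ Phi N a δ τ K P₁ P₂ P₃ S R *ᵥ Sum.elim X (Sum.elim Y Z)
      = Y ⬝ᵥ P₁ *ᵥ X + X ⬝ᵥ P₁ *ᵥ Y + 2 * δ * (X ⬝ᵥ P₁ *ᵥ X)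
        + X ⬝ᵥ S *ᵥ X - Real.exp (-2 * δ * τ) * (Z ⬝ᵥ S *ᵥ Z) + τ ^ 2 * (Y ⬝ᵥ R *ᵥ Y)
        - Real.exp (-2 * δ * τ) * ((X - Z) ⬝ᵥ R *ᵥ (X - Z))
        + 2 * ((P₂ *ᵥ X + P₃ *ᵥ Y) ⬝ᵥ (Amat N a *ᵥ X + (Bmat N * K) *ᵥ Z - Y)) := by
  simp only [Phi, fromBlocks_mulVec, fromCols_mulVec_sumElim, fromRows_mulVec,
    sumElim_dotProduct_sumElim, Sum.elim_comp_inl, Sum.elim_comp_inr, transpose_add,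
    transpose_sub, transpose_mul, transpose_transpose, transpose_smul, add_mulVec,
    sub_mulVec, neg_mulVec, smul_mulVec, ← mulVec_mulVec, dotProduct_add, dotProduct_sub,
    dotProduct_neg, dotProduct_smul, add_dotProduct, sub_dotProduct, mulVec_sub, smul_eq_mul,
    hP₁, hR, dotProduct_mulVec _ (_ᵀ), vecMul_transpose]
  rw [dotProduct_comm (Amat N a *ᵥ X) (P₂ *ᵥ X), dotProduct_comm (Amat N a *ᵥ X) (P₃ *ᵥ Y),
    dotProduct_comm Y (P₂ *ᵥ X), dotProduct_comm Y (P₃ *ᵥ Y),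
    dotProduct_comm (Bmat N *ᵥ K *ᵥ Z) (P₂ *ᵥ X), dotProduct_comm (Bmat N *ᵥ K *ᵥ Z) (P₃ *ᵥ Y)]
  ring

theorem stmt2 (N : ℕ) (a δ τ : ℝ) (hδ : 0 < δ) (hτ : 0 < τ)
    (K : Matrix (Fin 1) (Fin (N + 1)) ℝ)
    (P₁ P₂ P₃ S R : Matrix (Fin (N + 1)) (Fin (N + 1)) ℝ)
    (hP₁ : P₁.PosDef) (hR : R.PosDef)
    (x x' : ℝ → (Fin (N + 1) → ℝ))
    (hx : ∀ t, 0 ≤ t → HasDerivAt x (x' t) t)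
    (hx' : ContinuousOn x' (Set.Ici 0))
    (hode : ∀ t, τ ≤ t → x' t = (Amat N a).mulVec (x t) + (Bmat N * K).mulVec (x (t - τ)))
    (V₁ : ℝ → ℝ)
    (hV₁ : V₁ = fun t =>
      x t ⬝ᵥ P₁.mulVec (x t)
        + (∫ s in (t - τ)..t, Real.exp (-2 * δ * (t - s)) * (x s ⬝ᵥ S.mulVec (x s)))
        + τ * ∫ θ in (-τ)..(0 : ℝ),
            ∫ s in (t + θ)..t, Real.exp (-2 * δ * (t - s)) * (x' s ⬝ᵥ R.mulVec (x' s)))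
    (t : ℝ) (ht : τ ≤ t) (hdiff : DifferentiableAt ℝ V₁ t) :
    deriv V₁ t + 2 * δ * V₁ t ≤
      (Sum.elim (x t) (Sum.elim (x' t) (x (t - τ)))) ⬝ᵥ
        (Phi N a δ τ K P₁ P₂ P₃ S R).mulVec
          (Sum.elim (x t) (Sum.elim (x' t) (x (t - τ)))) := by
  have hIci : Ici (t - τ) ⊆ Ici 0 := Ici_subset_Ici.2 (sub_nonneg.2 ht)
  have hV : V₁ = fun r => x r ⬝ᵥ P₁ *ᵥ x r + delayIntegral δ τ (fun s => x s ⬝ᵥ S *ᵥ x s) r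
      + τ * doubleDelayIntegral δ τ (fun s => x' s ⬝ᵥ R *ᵥ x' s) r := hV₁
  have hxc : ContinuousOn x (Ici (t - τ)) := fun s hs =>
    (hx s (hIci hs)).continuousAt.continuousWithinAt
  have hV' := (((hx t (by linarith)).dotProduct_mulVec P₁).hasDerivWithinAt.fun_add
    (hasDerivWithinAt_delayIntegral (δ := δ) hτ.le (hxc.dotProduct_mulVec S))).fun_add
    ((hasDerivWithinAt_doubleDelayIntegral (δ := δ) hτ.le
      ((hx'.mono hIci).dotProduct_mulVec R)).const_mul τ)
  rw [← hV] at hV'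
  -- Only a right derivative is available: the hypotheses control `x` on `[0, ∞)` only, and for
  -- `t = τ` the window `[r - τ, r]` leaves it when `r < t`.
  rw [← hdiff.hasDerivAt.hasDerivWithinAt.derivWithin (uniqueDiffWithinAt_Ici t),
    hV'.derivWithin (uniqueDiffWithinAt_Ici t)]
  have hJensen := hR.posSemidef.exp_mul_dotProduct_mulVec_sub_le_delayIntegral hδ.le hτ.le
    (fun s hs => hx s (hIci hs.1)) (hx'.mono (Icc_subset_Ici_self.trans hIci))
  rw [dotProduct_Phi_mulVec N a δ τ K P₁ P₂ P₃ S R (isHermitian_iff_isSymm.1 hP₁.isHermitian)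
    (isHermitian_iff_isSymm.1 hR.isHermitian), ← hode t ht, sub_self, dotProduct_zero, mul_zero,
    add_zero, hV]
  linarith
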